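/- Let G = (Σ, V, T, R, S) be an extended ET0L grammar, i.e. one in which each table τ ∈ T consists of replacement rules of the form τ : X → L_{X,τ} where each L_{X,τ} ⊆ (Σ ∪ V)* is an ET0L language, and applying τ replaces each occurrence of each non-terminal X independently by an arbitrary word of L_{X,τ}. Then the language generated by G (all w ∈ Σ* derivable from S by a sequence of tables lying in R) is an ET0L language. In other words, extended ET0L grammars have no more expressive power than ET0L grammars. -/

import Mathlib

/-- `L` is a regular language: it is accepted by some DFA with finitely many states. -/
def IsRegularLang {T : Type} (L : Language T) : Prop :=
  ∃ (Q : Type) (_ : Fintype Q) (M : DFA T Q), M.accepts = L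

/-- One application of a table `ρ` (assigning to each non-terminal a set of allowed
replacement words): every occurrence of every non-terminal is replaced, independently,
by some word allowed by `ρ`; terminals are left unchanged. -/
inductive TableStep {σ V : Type} (ρ : V → Set (List (σ ⊕ V))) :
    List (σ ⊕ V) → List (σ ⊕ V) → Prop
  | nil : TableStep ρ [] []
  | term (a : σ) {u u' : List (σ ⊕ V)} :
      TableStep ρ u u' → TableStep ρ (Sum.inl a :: u) (Sum.inl a :: u')
  | nonterm (X : V) {w : List (σ ⊕ V)} (hw : w ∈ ρ X) {u u' : List (σ ⊕ V)} :
      TableStep ρ u u' → TableStep ρ (Sum.inr X :: u) (w ++ u')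

/-- Applying a sequence of tables from left to right. -/
def SeqDerives {σ V : Type} :
    List (V → Set (List (σ ⊕ V))) → List (σ ⊕ V) → List (σ ⊕ V) → Prop
  | [], u, w => u = w
  | τ :: ts, u, w => ∃ v, TableStep τ u v ∧ SeqDerives ts v w

/-- An ET0L grammar over the terminal alphabet `σ`: finitely many non-terminals `V`,
a finite set `T` of tables (each table a finite set of context-free rules containing
at least one rule for every non-terminal), a regular rational control, and a start symbol. -/
structure ET0LGrammar (σ : Type) where
  V : Type
  finV : Fintype V
  T : Type
  finT : Fintype T
  rules : T → V → List (List (σ ⊕ V))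
  rules_nonempty : ∀ (τ : T) (X : V), rules τ X ≠ []
  control : Language T
  control_regular : IsRegularLang control
  start : V

/-- The set of replacement words a table of an ET0L grammar allows for a non-terminal. -/
def ET0LGrammar.ruleSet {σ : Type} (G : ET0LGrammar σ) (τ : G.T) :
    G.V → Set (List (σ ⊕ G.V)) :=
  fun X => {w | w ∈ G.rules τ X}

/-- The language generated by an ET0L grammar. -/
def ET0LGrammar.language {σ : Type} (G : ET0LGrammar σ) : Language σ :=
  { w | ∃ ts : List G.T, ts ∈ G.control ∧
      SeqDerives (ts.map G.ruleSet) [Sum.inr G.start] (w.map Sum.inl) }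

/-- `L` is an ET0L language. -/
def IsET0L {σ : Type} (L : Language σ) : Prop :=
  ∃ G : ET0LGrammar σ, G.language = L


/-- An extended ET0L grammar: each table assigns to each non-terminal an ET0L language
of allowed replacement words over `σ ⊕ V`. -/
structure ExtET0LGrammar (σ : Type) where
  V : Type
  finV : Fintype V
  T : Type
  finT : Fintype T
  rules : T → V → Language (σ ⊕ V)
  rules_ET0L : ∀ (τ : T) (X : V), IsET0L (rules τ X)
  control : Language T
  control_regular : IsRegularLang control
  start : V

/-- The language generated by an extended ET0L grammar. -/
def ExtET0LGrammar.language {σ : Type} (G : ExtET0LGrammar σ) : Language σ :=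
  { w | ∃ ts : List G.T, ts ∈ G.control ∧
      SeqDerives (ts.map G.rules) [Sum.inr G.start] (w.map Sum.inl) }

/-!
Each step of `G` by a table `τ` is simulated by a table `start τ`, which marks every
non-terminal as pending, followed by one block per pending occurrence `X`: a table
`expand (τ, X)` starts a derivation of an ET0L grammar `H` for `G.rules τ X` at that occurrence,
and tables `run (τ, X) t` carry it out on a private copy of the non-terminals of `H`. The control
automaton runs `G`'s control automaton on the `start` tables and that of `H` inside each block.
A block may be ended (by the next `expand` or `start`) only when its control word is accepted,
and then each running derivation has either produced a word of `G.rules τ X` or still contains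
a non-terminal of `H`, which the next table turns into a trap symbol that no terminal word
contains. Likewise for pending occurrences left at the next `start`. Hence the terminal words
derivable in the simulation are exactly those derivable in `G`.
-/

theorem List.eq_map_inl_or_exists_inr {α β : Type} (s : List (α ⊕ β)) :
    (∃ m : List α, s = m.map .inl) ∨ ∃ b, .inr b ∈ s := by
  induction s with
  | nil => exact .inl ⟨[], rfl⟩
  | cons x s ih =>
    rcases x with a | b
    · rcases ih with ⟨m, rfl⟩ | ⟨b, hb⟩
      · exact .inl ⟨a :: m, rfl⟩
      · exact .inr ⟨b, List.mem_cons_of_mem _ hb⟩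
    · exact .inr ⟨b, List.mem_cons_self⟩

section Substitution

variable {σ U V W : Type}

/-- `Subst ρ u v`: `v` arises from `u` by replacing every occurrence of every non-terminal `X`
by some word of `ρ X`. This is `TableStep`, except that the target non-terminals may differ
from the source ones. -/
inductive Subst (ρ : V → Set (List (σ ⊕ W))) : List (σ ⊕ V) → List (σ ⊕ W) → Prop
  | nil : Subst ρ [] []
  | inl (a : σ) {u : List (σ ⊕ V)} {v : List (σ ⊕ W)} :
      Subst ρ u v → Subst ρ (.inl a :: u) (.inl a :: v)
  | inr (X : V) {w : List (σ ⊕ W)} (hw : w ∈ ρ X) {u : List (σ ⊕ V)} {v : List (σ ⊕ W)} :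
      Subst ρ u v → Subst ρ (.inr X :: u) (w ++ v)

theorem tableStep_iff_subst {ρ : V → Set (List (σ ⊕ V))} {u v : List (σ ⊕ V)} :
    TableStep ρ u v ↔ Subst ρ u v := by
  constructor
  · intro h
    induction h with
    | nil => exact .nil
    | term a _ ih => exact .inl a ih
    | nonterm X hw _ ih => exact .inr X hw ih
  · intro h
    induction h with
    | nil => exact .nil
    | inl a _ ih => exact .term a ih
    | inr X hw _ ih => exact .nonterm X hw ih

def substComp (ρ : V → Set (List (σ ⊕ W))) (ρ' : W → Set (List (σ ⊕ U))) :
    V → Set (List (σ ⊕ U)) :=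
  fun X => {w | ∃ v ∈ ρ X, Subst ρ' v w}

namespace Subst

variable {ρ ρ' : V → Set (List (σ ⊕ W))} {u u₁ u₂ : List (σ ⊕ V)} {v v₁ v₂ : List (σ ⊕ W)}

@[simp]
theorem nil_left_iff : Subst ρ [] v ↔ v = [] :=
  ⟨fun h => by cases h; rfl, fun h => h ▸ .nil⟩

@[simp]
theorem inl_cons_iff {a : σ} :
    Subst ρ (.inl a :: u) v ↔ ∃ v', v = .inl a :: v' ∧ Subst ρ u v' :=
  ⟨fun h => by cases h with | inl _ h => exact ⟨_, rfl, h⟩, fun ⟨_, hv, h⟩ => hv ▸ .inl a h⟩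

@[simp]
theorem inr_cons_iff {X : V} :
    Subst ρ (.inr X :: u) v ↔ ∃ w ∈ ρ X, ∃ v', v = w ++ v' ∧ Subst ρ u v' :=
  ⟨fun h => by cases h with | inr _ hw h => exact ⟨_, hw, _, rfl, h⟩,
    fun ⟨_, hw, _, hv, h⟩ => hv ▸ .inr X hw h⟩

theorem singleton_inr_iff {X : V} {w : List (σ ⊕ W)} : Subst ρ [.inr X] w ↔ w ∈ ρ X := by
  simp

theorem append (h₁ : Subst ρ u₁ v₁) (h₂ : Subst ρ u₂ v₂) : Subst ρ (u₁ ++ u₂) (v₁ ++ v₂) := by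
  induction h₁ with
  | nil => exact h₂
  | inl a _ ih => exact .inl a ih
  | inr X hw _ ih => rw [List.append_assoc]; exact .inr X hw ih

theorem exists_of_append (h : Subst ρ (u₁ ++ u₂) v) :
    ∃ v₁ v₂, v = v₁ ++ v₂ ∧ Subst ρ u₁ v₁ ∧ Subst ρ u₂ v₂ := by
  induction u₁ generalizing v with
  | nil => exact ⟨[], v, rfl, .nil, h⟩
  | cons x u ih =>
    rcases x with a | X
    · obtain ⟨v', rfl, h'⟩ := inl_cons_iff.1 h
      obtain ⟨v₁, v₂, rfl, h₁, h₂⟩ := ih h'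
      exact ⟨_, v₂, rfl, .inl a h₁, h₂⟩
    · obtain ⟨w, hw, v', rfl, h'⟩ := inr_cons_iff.1 h
      obtain ⟨v₁, v₂, rfl, h₁, h₂⟩ := ih h'
      exact ⟨w ++ v₁, v₂, (List.append_assoc _ _ _).symm, .inr X hw h₁, h₂⟩

theorem refl {ρ : V → Set (List (σ ⊕ V))} {u : List (σ ⊕ V)}
    (h : ∀ X, .inr X ∈ u → [.inr X] ∈ ρ X) : Subst ρ u u := by
  induction u with
  | nil => exact .nil
  | cons x u ih =>
    have ih' := ih fun X hX => h X (List.mem_cons_of_mem x hX)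
    rcases x with a | X
    · exact .inl a ih'
    · exact .inr X (h X List.mem_cons_self) ih'

theorem mono (hρ : ∀ X, ρ X ⊆ ρ' X) (h : Subst ρ u v) : Subst ρ' u v := by
  induction h with
  | nil => exact .nil
  | inl a _ ih => exact .inl a ih
  | inr X hw _ ih => exact .inr X (hρ X hw) ih

theorem trans {ρ' : W → Set (List (σ ⊕ U))} {w : List (σ ⊕ U)} (h : Subst ρ u v)
    (h' : Subst ρ' v w) : Subst (substComp ρ ρ') u w := by
  induction h generalizing w with
  | nil => rw [nil_left_iff.1 h']; exact .nil
  | inl a _ ih =>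
    obtain ⟨w', rfl, hw'⟩ := inl_cons_iff.1 h'
    exact .inl a (ih hw')
  | inr X hw _ ih =>
    obtain ⟨w₁, w₂, rfl, h₁, h₂⟩ := exists_of_append h'
    exact .inr X (show w₁ ∈ substComp ρ ρ' X from ⟨_, hw, h₁⟩) (ih h₂)

theorem exists_of_substComp {ρ' : W → Set (List (σ ⊕ U))} {w : List (σ ⊕ U)}
    (h : Subst (substComp ρ ρ') u w) : ∃ v, Subst ρ u v ∧ Subst ρ' v w := by
  induction h with
  | nil => exact ⟨[], .nil, .nil⟩
  | inl a _ ih =>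
    obtain ⟨v, h, h'⟩ := ih
    exact ⟨_, .inl a h, .inl a h'⟩
  | inr X hw _ ih =>
    obtain ⟨v₀, hv₀, h₀⟩ := hw
    obtain ⟨v, h, h'⟩ := ih
    exact ⟨_, .inr X hv₀ h, h₀.append h'⟩

theorem pure_iff {f : V → W} :
    Subst (fun X => {[.inr (f X)]}) u v ↔ v = u.map (Sum.map id f) := by
  induction u generalizing v with
  | nil => simp
  | cons x u ih => rcases x with a | X <;> simp [ih]

theorem map_iff {f : U → V} {u : List (σ ⊕ U)} :
    Subst ρ (u.map (Sum.map id f)) v ↔ Subst (ρ ∘ f) u v := by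
  induction u generalizing v with
  | nil => simp
  | cons x u ih => rcases x with a | X <;> simp [ih]

theorem image_map_iff {ρ : V → Set (List (σ ⊕ U))} {f : U → W} :
    Subst (fun X => List.map (Sum.map id f) '' ρ X) u v ↔
      ∃ w, Subst ρ u w ∧ v = w.map (Sum.map id f) := by
  have hcomp : (fun X => List.map (Sum.map id f) '' ρ X) =
      substComp ρ (fun Y => {[.inr (f Y)]}) := by
    ext X w
    simp [substComp, pure_iff, eq_comm]
  rw [hcomp]
  refine ⟨fun h => ?_, fun ⟨w, h, hv⟩ => h.trans (pure_iff.2 hv)⟩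
  obtain ⟨w, h, hv⟩ := exists_of_substComp h
  exact ⟨w, h, pure_iff.1 hv⟩

theorem mem_of_mem {X : V} {a : σ ⊕ W} (h : Subst ρ u v) (hX : .inr X ∈ u)
    (hρ : ∀ w ∈ ρ X, a ∈ w) : a ∈ v := by
  induction h with
  | nil => cases hX
  | inl b _ ih =>
    simp only [List.mem_cons, reduceCtorEq, false_or] at hX
    exact List.mem_cons_of_mem _ (ih hX)
  | inr Y hw _ ih =>
    rcases List.mem_cons.1 hX with hXY | hX
    · cases hXY
      exact List.mem_append_left _ (hρ _ hw)
    · exact List.mem_append_right _ (ih hX)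

theorem of_union {P : σ ⊕ W → Prop} (h : Subst (fun X => ρ X ∪ {w | ∃ a ∈ w, P a}) u v)
    (hv : ∀ a ∈ v, ¬ P a) : Subst ρ u v := by
  induction h with
  | nil => exact .nil
  | inl a _ ih => exact .inl a (ih fun b hb => hv b (List.mem_cons_of_mem _ hb))
  | inr X hw _ ih =>
    refine .inr X (hw.resolve_right ?_) (ih fun b hb => hv b (List.mem_append_right _ hb))
    rintro ⟨a, ha, hPa⟩
    exact hv a (List.mem_append_left _ ha) hPa

end Subst

end Substitution

namespace SeqDerives

variable {σ V : Type} {cs cs₁ cs₂ : List (V → Set (List (σ ⊕ V)))}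
  {u v w u₁ u₂ v₁ v₂ : List (σ ⊕ V)}

theorem trans (h₁ : SeqDerives cs₁ u v) (h₂ : SeqDerives cs₂ v w) :
    SeqDerives (cs₁ ++ cs₂) u w := by
  induction cs₁ generalizing u with
  | nil => exact (show u = v from h₁) ▸ h₂
  | cons ρ cs ih =>
    obtain ⟨u', hu', h₁⟩ := h₁
    exact ⟨u', hu', ih h₁⟩

theorem append (h₁ : SeqDerives cs u₁ v₁) (h₂ : SeqDerives cs u₂ v₂) :
    SeqDerives cs (u₁ ++ u₂) (v₁ ++ v₂) := by
  induction cs generalizing u₁ u₂ with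
  | nil => exact congrArg₂ (· ++ ·) h₁ h₂
  | cons ρ cs ih =>
    obtain ⟨w₁, hw₁, h₁⟩ := h₁
    obtain ⟨w₂, hw₂, h₂⟩ := h₂
    refine ⟨w₁ ++ w₂, ?_, ih h₁ h₂⟩
    exact tableStep_iff_subst.2 ((tableStep_iff_subst.1 hw₁).append (tableStep_iff_subst.1 hw₂))

theorem refl_of_mem (h : ∀ ρ ∈ cs, ∀ X, .inr X ∈ u → [.inr X] ∈ ρ X) : SeqDerives cs u u := by
  induction cs with
  | nil => rfl
  | cons ρ cs ih =>
    exact ⟨u, tableStep_iff_subst.2 (.refl (h ρ List.mem_cons_self)),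
      ih fun ρ' hρ' => h ρ' (List.mem_cons_of_mem _ hρ')⟩

theorem mem_of_mem {X : V} (h : SeqDerives cs u v) (hX : .inr X ∈ u)
    (hcs : ∀ ρ ∈ cs, ∀ w ∈ ρ X, .inr X ∈ w) : .inr X ∈ v := by
  induction cs generalizing u with
  | nil => exact (show u = v from h) ▸ hX
  | cons ρ cs ih =>
    obtain ⟨u', hu', h⟩ := h
    exact ih h ((tableStep_iff_subst.1 hu').mem_of_mem hX (hcs ρ List.mem_cons_self))
      fun ρ' hρ' => hcs ρ' (List.mem_cons_of_mem _ hρ')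

end SeqDerives

namespace IsRegularLang

variable {T : Type} {L : Language T}

def State (h : IsRegularLang L) : Type := Classical.choose h

noncomputable instance (h : IsRegularLang L) : Fintype h.State :=
  Classical.choose (Classical.choose_spec h)

noncomputable def dfa (h : IsRegularLang L) : DFA T h.State :=
  Classical.choose (Classical.choose_spec (Classical.choose_spec h))

theorem dfa_accepts (h : IsRegularLang L) : h.dfa.accepts = L :=
  Classical.choose_spec (Classical.choose_spec (Classical.choose_spec h))

end IsRegularLang

instance {σ : Type} (H : ET0LGrammar σ) : Fintype H.V := H.finV
instance {σ : Type} (H : ET0LGrammar σ) : Fintype H.T := H.finT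

namespace ExtET0LGrammar

noncomputable section

variable {σ : Type} (G : ExtET0LGrammar σ)

instance : Fintype G.V := G.finV
instance : Fintype G.T := G.finT

def ruleGrammar (p : G.T × G.V) : ET0LGrammar (σ ⊕ G.V) :=
  Classical.choose (G.rules_ET0L p.1 p.2)

theorem language_ruleGrammar (p : G.T × G.V) : (G.ruleGrammar p).language = G.rules p.1 p.2 :=
  Classical.choose_spec (G.rules_ET0L p.1 p.2)

/-- Non-terminals of the simulating grammar: `plain X` is an occurrence of `X` between two
simulated steps, `pending X` one not yet expanded in the current step, `sub p A` a non-terminal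
of a running derivation of `ruleGrammar p`, and `dead` the trap. -/
inductive Nonterm where
  | plain (X : G.V)
  | pending (X : G.V)
  | sub (p : G.T × G.V) (A : (G.ruleGrammar p).V)
  | dead

inductive Table where
  | start (τ : G.T)
  | expand (p : G.T × G.V)
  | run (p : G.T × G.V) (t : (G.ruleGrammar p).T)

instance : Finite G.Nonterm :=
  Finite.of_surjective (Sum.elim .plain <| Sum.elim .pending <|
      Sum.elim (fun A : Σ p, (G.ruleGrammar p).V => .sub A.1 A.2) fun _ : Unit => .dead)
    (by rintro (X | X | ⟨p, A⟩ | _)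
        exacts [⟨.inl X, rfl⟩, ⟨.inr (.inl X), rfl⟩, ⟨.inr (.inr (.inl ⟨p, A⟩)), rfl⟩,
          ⟨.inr (.inr (.inr ())), rfl⟩])

instance : Finite G.Table :=
  Finite.of_surjective (Sum.elim .start <| Sum.elim .expand
      fun t : Σ p, (G.ruleGrammar p).T => .run t.1 t.2)
    (by rintro (τ | p | ⟨p, t⟩)
        exacts [⟨.inl τ, rfl⟩, ⟨.inr (.inl p), rfl⟩, ⟨.inr (.inr ⟨p, t⟩), rfl⟩])

def embedSub (p : G.T × G.V) : (σ ⊕ G.V) ⊕ (G.ruleGrammar p).V → σ ⊕ G.Nonterm :=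
  Sum.elim (Sum.map id .plain) (.inr ∘ .sub p)

@[simp]
theorem embedSub_inl (p : G.T × G.V) (x : σ ⊕ G.V) : G.embedSub p (.inl x) = Sum.map id .plain x :=
  rfl

@[simp]
theorem embedSub_inr (p : G.T × G.V) (A : (G.ruleGrammar p).V) :
    G.embedSub p (.inr A) = .inr (.sub p A) :=
  rfl

open Classical in
def simRules : G.Table → G.Nonterm → List (List (σ ⊕ G.Nonterm))
  | .start _, .plain X => [[.inr (.pending X)]]
  | .expand p, .pending X =>
      if X = p.2 then [[.inr (.pending X)], [.inr (.sub p (G.ruleGrammar p).start)]]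
      else [[.inr (.pending X)]]
  | .run p t, .sub p' A =>
      if h : p' = p then ((G.ruleGrammar p).rules t (h ▸ A)).map (List.map (G.embedSub p))
      else [[.inr .dead]]
  | .expand _, .plain X => [[.inr (.plain X)]]
  | .run _ _, .plain X => [[.inr (.plain X)]]
  | .run _ _, .pending X => [[.inr (.pending X)]]
  | _, _ => [[.inr .dead]]

def simRuleSet (l : G.Table) (X : G.Nonterm) : Set (List (σ ⊕ G.Nonterm)) :=
  {w | w ∈ G.simRules l X}

@[simp]
theorem mem_simRuleSet {l : G.Table} {X : G.Nonterm} {w : List (σ ⊕ G.Nonterm)} :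
    w ∈ G.simRuleSet l X ↔ w ∈ G.simRules l X :=
  Iff.rfl

theorem simRules_ne_nil (l : G.Table) (X : G.Nonterm) : G.simRules l X ≠ [] := by
  rcases l with τ | p | ⟨p, t⟩ <;> rcases X with X | X | ⟨p', A⟩ | _ <;>
    simp only [simRules, ne_eq, reduceCtorEq, not_false_eq_true]
  · split <;> simp
  · split
    · rename_i h
      subst h
      simpa using (G.ruleGrammar _).rules_nonempty t A
    · simp

/-- The states of the control automaton, `none` being the trap. In `phase q o`, `q` is the state
of `G`'s control automaton after the `start` tables read so far and `o` the last of them; in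
`block q p s`, a derivation of `ruleGrammar p` is running with control state `s`. -/
inductive CtrlState where
  | phase (q : G.control_regular.State) (o : Option G.T)
  | block (q : G.control_regular.State) (p : G.T × G.V)
      (s : (G.ruleGrammar p).control_regular.State)

instance : Finite G.CtrlState :=
  Finite.of_surjective (Sum.elim (fun x : _ × Option G.T => .phase x.1 x.2)
      fun x : _ × Σ p, (G.ruleGrammar p).control_regular.State => .block x.1 x.2.1 x.2.2)
    (by rintro (⟨q, o⟩ | ⟨q, p, s⟩)
        exacts [⟨.inl (q, o), rfl⟩, ⟨.inr (q, ⟨p, s⟩), rfl⟩])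

namespace CtrlState

variable {G}

def top : G.CtrlState → G.control_regular.State
  | phase q _ => q
  | block q _ _ => q

def current : G.CtrlState → Option G.T
  | phase _ o => o
  | block _ p _ => some p.1

def IsClosed : G.CtrlState → Prop
  | phase _ _ => True
  | block _ p s => s ∈ (G.ruleGrammar p).control_regular.dfa.accept

end CtrlState

open Classical in
def ctrlStep : G.CtrlState → G.Table → Option G.CtrlState
  | st, .start τ =>
      if st.IsClosed then some (.phase (G.control_regular.dfa.step st.top τ) (some τ)) else none
  | st, .expand p =>
      if st.IsClosed ∧ st.current = some p.1 then
        some (.block st.top p (G.ruleGrammar p).control_regular.dfa.start)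
      else none
  | .block q p s, .run p' t =>
      if h : p = p' then
        some (.block q p' ((G.ruleGrammar p').control_regular.dfa.step (h ▸ s) t))
      else none
  | .phase _ _, .run _ _ => none

def ctrlDFA : DFA G.Table (Option G.CtrlState) where
  step o l := o.bind (G.ctrlStep · l)
  start := some (.phase G.control_regular.dfa.start none)
  accept := {o | ∃ st, o = some st ∧ st.IsClosed ∧ st.top ∈ G.control_regular.dfa.accept}

def toET0L : ET0LGrammar σ where
  V := G.Nonterm
  finV := Fintype.ofFinite _
  T := G.Table
  finT := Fintype.ofFinite _
  rules := G.simRules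
  rules_nonempty := G.simRules_ne_nil
  control := G.ctrlDFA.accepts
  control_regular := ⟨_, Fintype.ofFinite _, G.ctrlDFA, rfl⟩
  start := .plain G.start

theorem ctrlDFA_evalFrom_none (c : List G.Table) : G.ctrlDFA.evalFrom none c = none := by
  induction c with
  | nil => rfl
  | cons l c ih => exact ih

theorem ctrlDFA_evalFrom_some_cons (st : G.CtrlState) (l : G.Table) (c : List G.Table) :
    G.ctrlDFA.evalFrom (some st) (l :: c) = G.ctrlDFA.evalFrom (G.ctrlStep st l) c :=
  rfl

theorem subst_map_plain_iff {l : G.Table} {f : G.V → G.Nonterm}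
    (hl : ∀ X, G.simRules l (.plain X) = [[.inr (f X)]]) {m : List (σ ⊕ G.V)}
    {w : List (σ ⊕ G.Nonterm)} :
    Subst (G.simRuleSet l) (m.map (Sum.map id .plain)) w ↔ w = m.map (Sum.map id f) := by
  rw [Subst.map_iff, ← Subst.pure_iff]
  have : G.simRuleSet l ∘ .plain = fun X => {[.inr (f X)]} := by
    ext X w
    simp [hl]
  rw [this]

theorem subst_run_map_embedSub_iff {p : G.T × G.V} {t : (G.ruleGrammar p).T}
    {s : List ((σ ⊕ G.V) ⊕ (G.ruleGrammar p).V)} {z : List (σ ⊕ G.Nonterm)} :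
    Subst (G.simRuleSet (.run p t)) (s.map (G.embedSub p)) z ↔
      ∃ s', z = s'.map (G.embedSub p) ∧ TableStep ((G.ruleGrammar p).ruleSet t) s s' := by
  simp only [tableStep_iff_subst]
  induction s generalizing z with
  | nil => simp
  | cons x s ih =>
    rcases x with (a | Y) | A
    · simp [ih]
    · simp [simRules, ih]
    · simp only [List.map_cons, embedSub_inr, Subst.inr_cons_iff, mem_simRuleSet, simRules,
        dite_true, List.mem_map, ih]
      constructor
      · rintro ⟨_, ⟨w, hw, rfl⟩, _, rfl, s', rfl, hs'⟩
        exact ⟨w ++ s', by simp, w, hw, s', rfl, hs'⟩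
      · rintro ⟨_, rfl, w, hw, s', rfl, hs'⟩
        exact ⟨_, ⟨w, hw, rfl⟩, _, by simp, s', rfl, hs'⟩

def doneRules : Option G.T → G.V → Set (List (σ ⊕ G.V))
  | none => fun X => {[.inr X]}
  | some τ => G.rules τ

def phaseRules (o : Option G.T) (X : G.V) : Set (List (σ ⊕ G.Nonterm)) :=
  insert [.inr (.pending X)] (List.map (Sum.map id .plain) '' G.doneRules o X)

def IsSubLetter (a : σ ⊕ G.Nonterm) : Prop :=
  ∃ p A, a = .inr (.sub p A)

def closedRules (o : Option G.T) (X : G.V) : Set (List (σ ⊕ G.Nonterm)) :=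
  G.phaseRules o X ∪ {w | ∃ a ∈ w, G.IsSubLetter a}

def runningWords (p : G.T × G.V) (c : List (G.ruleGrammar p).T) : Set (List (σ ⊕ G.Nonterm)) :=
  List.map (G.embedSub p) ''
    {s | SeqDerives (c.map (G.ruleGrammar p).ruleSet) [.inr (G.ruleGrammar p).start] s}

def blockRules (p : G.T × G.V) (c : List (G.ruleGrammar p).T) (X : G.V) :
    Set (List (σ ⊕ G.Nonterm)) :=
  G.phaseRules (some p.1) X ∪ {w | X = p.2 ∧ w ∈ G.runningWords p c}

/-- In a block state, `c` is the control word of the running derivations of `ruleGrammar p`. -/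
def Simulates : G.CtrlState → List (σ ⊕ G.V) → List (σ ⊕ G.Nonterm) → Prop
  | .phase _ o, u, z => Subst (G.phaseRules o) u z
  | .block _ p s, u, z => ∃ c, (G.ruleGrammar p).control_regular.dfa.evalFrom
      (G.ruleGrammar p).control_regular.dfa.start c = s ∧ Subst (G.blockRules p c) u z

theorem subst_doneRules_none_iff {u v : List (σ ⊕ G.V)} :
    Subst (G.doneRules none) u v ↔ v = u :=
  (Subst.pure_iff (f := id)).trans (by simp)

/-- A derivation of `ruleGrammar p` with accepted control word has either produced a word of
`G.rules p.1 p.2` or still contains one of its non-terminals. -/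
theorem blockRules_subset_closedRules {p : G.T × G.V} {c : List (G.ruleGrammar p).T}
    (hc : c ∈ (G.ruleGrammar p).control) (X : G.V) :
    G.blockRules p c X ⊆ G.closedRules (some p.1) X := by
  rintro w (hw | ⟨rfl, s, hs, rfl⟩)
  · exact .inl hw
  rcases s.eq_map_inl_or_exists_inr with ⟨m, rfl⟩ | ⟨A, hA⟩
  · refine .inl (.inr ⟨m, ?_, by simp [List.map_map, Function.comp_def]⟩)
    rw [doneRules, ← language_ruleGrammar]
    exact ⟨c, hc, hs⟩
  · exact .inr ⟨_, List.mem_map_of_mem hA, p, A, rfl⟩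

theorem dead_mem_of_subst {l : G.Table} (hl : ∀ p A, G.simRules l (.sub p A) = [[.inr .dead]])
    {w w' : List (σ ⊕ G.Nonterm)} (h : Subst (G.simRuleSet l) w w')
    (hw : ∃ a ∈ w, G.IsSubLetter a) : .inr .dead ∈ w' := by
  obtain ⟨_, ha, p, A, rfl⟩ := hw
  exact h.mem_of_mem ha fun v hv => by simp_all

theorem substComp_closedRules_start_subset (o : Option G.T) (τ : G.T) (X : G.V) :
    substComp (G.closedRules o) (G.simRuleSet (.start τ)) X ⊆
      List.map (Sum.map id .pending) '' G.doneRules o X ∪ {w | ∃ a ∈ w, a = .inr .dead} := by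
  rintro w' ⟨w, (rfl | ⟨m, hm, rfl⟩) | hw, h⟩
  · exact .inr ⟨_, by simp_all [simRules], rfl⟩
  · exact .inl ⟨m, hm, ((G.subst_map_plain_iff fun _ => rfl).1 h).symm⟩
  · exact .inr ⟨_, G.dead_mem_of_subst (fun _ _ => rfl) h hw, rfl⟩

theorem substComp_closedRules_expand_subset (p : G.T × G.V) (X : G.V) :
    substComp (G.closedRules (some p.1)) (G.simRuleSet (.expand p)) X ⊆
      G.blockRules p [] X ∪ {w | ∃ a ∈ w, a = .inr .dead} := by
  rintro w' ⟨w, (rfl | ⟨m, hm, rfl⟩) | hw, h⟩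
  · rw [Subst.singleton_inr_iff, mem_simRuleSet, simRules] at h
    split_ifs at h with hX
    · rcases List.mem_pair.1 h with rfl | rfl
      · exact .inl (.inl (Set.mem_insert _ _))
      · exact .inl (.inr ⟨hX, [.inr (G.ruleGrammar p).start], rfl, rfl⟩)
    · rw [List.mem_singleton.1 h]
      exact .inl (.inl (Set.mem_insert _ _))
  · rw [(G.subst_map_plain_iff fun _ => rfl).1 h]
    exact .inl (.inl (.inr ⟨m, hm, rfl⟩))
  · exact .inr ⟨_, G.dead_mem_of_subst (fun _ _ => rfl) h hw, rfl⟩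

theorem substComp_blockRules_run_subset {p : G.T × G.V} (c : List (G.ruleGrammar p).T)
    (t : (G.ruleGrammar p).T) (X : G.V) :
    substComp (G.blockRules p c) (G.simRuleSet (.run p t)) X ⊆ G.blockRules p (c ++ [t]) X := by
  rintro w' ⟨w, (rfl | ⟨m, hm, rfl⟩) | ⟨hX, s, hs, rfl⟩, h⟩
  · rw [Subst.singleton_inr_iff, mem_simRuleSet, simRules, List.mem_singleton] at h
    exact h ▸ .inl (Set.mem_insert _ _)
  · rw [(G.subst_map_plain_iff fun _ => rfl).1 h]
    exact .inl (.inr ⟨m, hm, rfl⟩)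
  · obtain ⟨s', rfl, hs'⟩ := G.subst_run_map_embedSub_iff.1 h
    refine .inr ⟨hX, s', ?_, rfl⟩
    rw [List.map_append]
    exact hs.trans ⟨s', hs', rfl⟩

namespace Simulates

variable {G} {st st' : G.CtrlState} {u : List (σ ⊕ G.V)} {z z' : List (σ ⊕ G.Nonterm)}

theorem subst_closedRules (h : G.Simulates st u z) (hst : st.IsClosed) :
    Subst (G.closedRules st.current) u z := by
  rcases st with ⟨q, o⟩ | ⟨q, p, s⟩
  · exact h.mono fun X => Set.subset_union_left
  · obtain ⟨c, rfl, h⟩ := h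
    refine h.mono (G.blockRules_subset_closedRules ?_)
    rw [← (G.ruleGrammar p).control_regular.dfa_accepts]
    exact hst

theorem ctrlStep_start {τ : G.T} (h : G.Simulates st u z)
    (hst : G.ctrlStep st (.start τ) = some st') (hz : Subst (G.simRuleSet (.start τ)) z z')
    (hdead : .inr .dead ∉ z') :
    st' = .phase (G.control_regular.dfa.step st.top τ) (some τ) ∧
      ∃ v, Subst (G.doneRules st.current) u v ∧ G.Simulates st' v z' := by
  simp only [ctrlStep, Option.ite_none_right_eq_some, Option.some.injEq] at hst
  obtain ⟨hcl, rfl⟩ := hst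
  have hz' := (((h.subst_closedRules hcl).trans hz).mono
    (G.substComp_closedRules_start_subset _ τ)).of_union fun a ha hdead' => hdead (hdead' ▸ ha)
  obtain ⟨v, hv, rfl⟩ := Subst.image_map_iff.1 hz'
  refine ⟨rfl, v, hv, (Subst.pure_iff.2 rfl).mono fun X => ?_⟩
  simp [phaseRules]

theorem ctrlStep_expand {p : G.T × G.V} (h : G.Simulates st u z)
    (hst : G.ctrlStep st (.expand p) = some st') (hz : Subst (G.simRuleSet (.expand p)) z z')
    (hdead : .inr .dead ∉ z') :
    st'.top = st.top ∧ st'.current = st.current ∧ G.Simulates st' u z' := by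
  simp only [ctrlStep, Option.ite_none_right_eq_some, Option.some.injEq] at hst
  obtain ⟨⟨hcl, hcur⟩, rfl⟩ := hst
  refine ⟨rfl, hcur.symm, [], rfl, ?_⟩
  have h' := h.subst_closedRules hcl
  rw [hcur] at h'
  exact ((h'.trans hz).mono (G.substComp_closedRules_expand_subset p)).of_union
    fun a ha hdead' => hdead (hdead' ▸ ha)

theorem ctrlStep_run {p : G.T × G.V} {t : (G.ruleGrammar p).T} (h : G.Simulates st u z)
    (hst : G.ctrlStep st (.run p t) = some st') (hz : Subst (G.simRuleSet (.run p t)) z z') :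
    st'.top = st.top ∧ st'.current = st.current ∧ G.Simulates st' u z' := by
  rcases st with ⟨q, o⟩ | ⟨q, p₀, s⟩
  · cases hst
  simp only [ctrlStep, Option.dite_none_right_eq_some, Option.some.injEq] at hst
  obtain ⟨rfl, rfl⟩ := hst
  obtain ⟨c, rfl, h⟩ := h
  refine ⟨rfl, rfl, c ++ [t], DFA.evalFrom_append_singleton .., ?_⟩
  exact (h.trans hz).mono (G.substComp_blockRules_run_subset c t)

theorem subst_doneRules_of_map_inl {w : List σ} (h : G.Simulates st u (w.map .inl))
    (hst : st.IsClosed) : Subst (G.doneRules st.current) u (w.map .inl) := by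
  have hsub : ∀ X, G.closedRules st.current X ⊆
      List.map (Sum.map id .plain) '' G.doneRules st.current X ∪
        {v | ∃ a ∈ v, ∃ N, a = .inr N} := by
    rintro X v ((rfl | hv) | ⟨a, ha, p, A, rfl⟩)
    · exact .inr ⟨_, List.mem_singleton_self _, _, rfl⟩
    · exact .inl hv
    · exact .inr ⟨_, ha, _, rfl⟩
  have h' := ((h.subst_closedRules hst).mono hsub).of_union (by simp)
  obtain ⟨v, hv, hwv⟩ := Subst.image_map_iff.1 h'
  have hinj : Function.Injective (List.map (Sum.map (id : σ → σ) (Nonterm.plain (G := G)))) :=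
    List.map_injective_iff.2
      (Sum.map_injective.2 ⟨Function.injective_id, fun _ _ => Nonterm.plain.inj⟩)
  have hvw : v = w.map .inl := hinj (by rw [← hwv]; simp [Function.comp_def])
  exact hvw ▸ hv

end Simulates

theorem dead_not_mem_of_seqDerives {c : List G.Table} {z : List (σ ⊕ G.Nonterm)} {w : List σ}
    (h : SeqDerives (c.map G.simRuleSet) z (w.map .inl)) : .inr .dead ∉ z := fun hz => by
  have := h.mem_of_mem hz fun ρ hρ v hv => by
    obtain ⟨l, -, rfl⟩ := List.mem_map.1 hρ
    rcases l with _ | _ | _ <;> simp_all [simRules]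
  simp at this

theorem exists_seqDerives_of_simulates (w : List σ) (c : List G.Table) :
    ∀ (st : G.CtrlState) (u : List (σ ⊕ G.V)) (z : List (σ ⊕ G.Nonterm)), G.Simulates st u z →
      SeqDerives (c.map G.simRuleSet) z (w.map .inl) →
      G.ctrlDFA.evalFrom (some st) c ∈ G.ctrlDFA.accept →
      ∃ v ts, Subst (G.doneRules st.current) u v ∧
        G.control_regular.dfa.evalFrom st.top ts ∈ G.control_regular.dfa.accept ∧
        SeqDerives (ts.map G.rules) v (w.map .inl) := by
  induction c with
  | nil =>
    rintro st u z h rfl ⟨_, ⟨⟩, hcl, htop⟩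
    exact ⟨_, [], h.subst_doneRules_of_map_inl hcl, htop, rfl⟩
  | cons l c ih =>
    rintro st u z h ⟨z₁, hz, hder⟩ hacc
    rw [ctrlDFA_evalFrom_some_cons] at hacc
    rcases hst : G.ctrlStep st l with _ | st'
    · rw [hst, ctrlDFA_evalFrom_none] at hacc
      obtain ⟨_, ⟨⟩, -⟩ := hacc
    rw [hst] at hacc
    have hdead := G.dead_not_mem_of_seqDerives hder
    rw [tableStep_iff_subst] at hz
    rcases l with τ | p | ⟨p, t⟩
    · obtain ⟨rfl, v, hv, h'⟩ := h.ctrlStep_start hst hz hdead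
      obtain ⟨v', ts, hv', hts, hder'⟩ := ih _ v z₁ h' hder hacc
      exact ⟨v, τ :: ts, hv, hts, v', tableStep_iff_subst.2 hv', hder'⟩
    · obtain ⟨htop, hcur, h'⟩ := h.ctrlStep_expand hst hz hdead
      rw [← htop, ← hcur]
      exact ih st' u z₁ h' hder hacc
    · obtain ⟨htop, hcur, h'⟩ := h.ctrlStep_run hst hz
      rw [← htop, ← hcur]
      exact ih st' u z₁ h' hder hacc

def Table.IsStart : G.Table → Prop
  | .start _ => True
  | _ => False

variable {G} in
theorem simRules_plain_of_not_isStart {l : G.Table} (hl : ¬ l.IsStart) (X : G.V) :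
    G.simRules l (.plain X) = [[.inr (.plain X)]] := by
  rcases l with _ | _ | _
  exacts [(hl trivial).elim, rfl, rfl]

variable {G} in
theorem pending_mem_simRules_of_not_isStart {l : G.Table} (hl : ¬ l.IsStart) (X : G.V) :
    [.inr (.pending X)] ∈ G.simRules l (.pending X) := by
  rcases l with _ | _ | _
  · exact (hl trivial).elim
  · simp only [simRules]
    split_ifs <;> simp
  · simp [simRules]

theorem seqDerives_refl_of_not_isStart {b : List G.Table} (hb : ∀ l ∈ b, ¬ l.IsStart)
    {z : List (σ ⊕ G.Nonterm)} (hz : ∀ N, .inr N ∈ z → (∃ X, N = .plain X) ∨ ∃ X, N = .pending X) :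
    SeqDerives (b.map G.simRuleSet) z z := by
  refine SeqDerives.refl_of_mem fun ρ hρ N hN => ?_
  obtain ⟨l, hl, rfl⟩ := List.mem_map.1 hρ
  rcases hz N hN with ⟨X, rfl⟩ | ⟨X, rfl⟩
  · simp [simRules_plain_of_not_isStart (hb l hl)]
  · exact pending_mem_simRules_of_not_isStart (hb l hl) X

theorem seqDerives_run {p : G.T × G.V} {c : List (G.ruleGrammar p).T}
    {s s' : List ((σ ⊕ G.V) ⊕ (G.ruleGrammar p).V)}
    (h : SeqDerives (c.map (G.ruleGrammar p).ruleSet) s s') :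
    SeqDerives ((c.map (.run p)).map G.simRuleSet) (s.map (G.embedSub p))
      (s'.map (G.embedSub p)) := by
  induction c generalizing s with
  | nil => exact congrArg _ h
  | cons t c ih =>
    obtain ⟨s₁, hs₁, h⟩ := h
    exact ⟨_, tableStep_iff_subst.2 (G.subst_run_map_embedSub_iff.2 ⟨s₁, rfl, hs₁⟩), ih h⟩

theorem ctrlDFA_evalFrom_run (q : G.control_regular.State) (p : G.T × G.V)
    (s : (G.ruleGrammar p).control_regular.State) (c : List (G.ruleGrammar p).T) :
    G.ctrlDFA.evalFrom (some (.block q p s)) (c.map (.run p)) =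
      some (.block q p ((G.ruleGrammar p).control_regular.dfa.evalFrom s c)) := by
  induction c generalizing s with
  | nil => rfl
  | cons t c ih =>
    rw [List.map_cons, ctrlDFA_evalFrom_some_cons]
    simp [ctrlStep, ih]

theorem ctrlDFA_evalFrom_block {st : G.CtrlState} (hst : st.IsClosed) {p : G.T × G.V}
    (hcur : st.current = some p.1) {c : List (G.ruleGrammar p).T}
    (hc : c ∈ (G.ruleGrammar p).control) :
    ∃ st', G.ctrlDFA.evalFrom (some st) (.expand p :: c.map (.run p)) = some st' ∧
      st'.IsClosed ∧ st'.top = st.top ∧ st'.current = some p.1 := by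
  rw [ctrlDFA_evalFrom_some_cons]
  simp only [ctrlStep, hst, hcur, and_self, if_true, ctrlDFA_evalFrom_run]
  refine ⟨_, rfl, ?_, rfl, rfl⟩
  rw [← (G.ruleGrammar p).control_regular.dfa_accepts] at hc
  exact hc

theorem exists_block_of_mem_rules {p : G.T × G.V} {m : List (σ ⊕ G.V)}
    (hm : m ∈ G.rules p.1 p.2) (u : List (σ ⊕ G.V)) :
    ∃ c ∈ (G.ruleGrammar p).control,
      SeqDerives ((.expand p :: c.map (.run p)).map G.simRuleSet)
        (.inr (.pending p.2) :: u.map (Sum.map id .pending))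
        (m.map (Sum.map id .plain) ++ u.map (Sum.map id .pending)) := by
  rw [← language_ruleGrammar] at hm
  obtain ⟨c, hc, hs⟩ := hm
  have hpending : ∀ N, .inr N ∈ u.map (Sum.map id .pending) → ∃ X, N = Nonterm.pending X := by
    intro N hN
    obtain ⟨_ | X, -, ⟨⟩⟩ := List.mem_map.1 hN
    exact ⟨X, rfl⟩
  refine ⟨c, hc, [.inr (.sub p (G.ruleGrammar p).start)] ++ u.map (Sum.map id .pending), ?_, ?_⟩
  · refine tableStep_iff_subst.2 (.inr _ (by simp [simRules]) (Subst.refl fun N hN => ?_))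
    obtain ⟨X, rfl⟩ := hpending N hN
    exact pending_mem_simRules_of_not_isStart id X
  · have hrun := G.seqDerives_run hs
    have hm : (m.map Sum.inl).map (G.embedSub p) = m.map (Sum.map id .plain) := by
      simp [Function.comp_def]
    rw [hm] at hrun
    exact hrun.append (G.seqDerives_refl_of_not_isStart (by simp [Table.IsStart])
      fun N hN => .inr (hpending N hN))

/-- A step of `G` by `τ` is simulated, after `start τ`, by one block per occurrence of a
non-terminal. -/
theorem exists_blocks_of_tableStep {τ : G.T} {u v : List (σ ⊕ G.V)}
    (h : TableStep (G.rules τ) u v) :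
    ∃ b : List G.Table, (∀ l ∈ b, ¬ l.IsStart) ∧
      (∀ st : G.CtrlState, st.IsClosed → st.current = some τ →
        ∃ st', G.ctrlDFA.evalFrom (some st) b = some st' ∧
          st'.IsClosed ∧ st'.top = st.top ∧ st'.current = some τ) ∧
      SeqDerives (b.map G.simRuleSet) (u.map (Sum.map id .pending))
        (v.map (Sum.map id .plain)) := by
  induction h with
  | nil => exact ⟨[], by simp, fun st hst hcur => ⟨st, rfl, hst, rfl, hcur⟩, rfl⟩
  | term a _ ih =>
    obtain ⟨b, hb, hdfa, hder⟩ := ih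
    exact ⟨b, hb, hdfa, SeqDerives.append (u₁ := [.inl a])
      (G.seqDerives_refl_of_not_isStart hb (by simp)) hder⟩
  | @nonterm X m hm u' v' _ ih =>
    obtain ⟨b, hb, hdfa, hder⟩ := ih
    obtain ⟨c, hc, hblock⟩ := G.exists_block_of_mem_rules (p := (τ, X)) hm u'
    refine ⟨(.expand (τ, X) :: c.map (.run (τ, X))) ++ b, ?_, fun st hst hcur => ?_, ?_⟩
    · simp only [List.cons_append, List.mem_cons, List.mem_append, List.mem_map]
      rintro l (rfl | ⟨t, -, rfl⟩ | hl)
      exacts [id, id, hb l hl]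
    · obtain ⟨st₁, hst₁, hcl₁, htop₁, hcur₁⟩ := G.ctrlDFA_evalFrom_block hst hcur hc
      obtain ⟨st₂, hst₂, hcl₂, htop₂, hcur₂⟩ := hdfa st₁ hcl₁ hcur₁
      rw [DFA.evalFrom_of_append, hst₁]
      exact ⟨st₂, hst₂, hcl₂, htop₂.trans htop₁, hcur₂⟩
    · rw [List.map_append, List.map_append]
      refine hblock.trans (SeqDerives.append (G.seqDerives_refl_of_not_isStart hb ?_) hder)
      intro N hN
      obtain ⟨_ | Y, -, ⟨⟩⟩ := List.mem_map.1 hN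
      exact .inl ⟨Y, rfl⟩

theorem exists_ctrlWord_of_seqDerives (w : List σ) (ts : List G.T) :
    ∀ u : List (σ ⊕ G.V), SeqDerives (ts.map G.rules) u (w.map .inl) →
      ∀ st : G.CtrlState, st.IsClosed →
        ∃ c, SeqDerives (c.map G.simRuleSet) (u.map (Sum.map id .plain)) (w.map .inl) ∧
          (G.control_regular.dfa.evalFrom st.top ts ∈ G.control_regular.dfa.accept →
            G.ctrlDFA.evalFrom (some st) c ∈ G.ctrlDFA.accept) := by
  induction ts with
  | nil =>
    rintro u rfl st hst
    refine ⟨[], ?_, fun htop => ⟨st, rfl, hst, htop⟩⟩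
    show (w.map .inl).map (Sum.map id (Nonterm.plain (G := G))) = w.map .inl
    simp [Function.comp_def]
  | cons τ ts ih =>
    rintro u ⟨v, hv, hder⟩ st hst
    obtain ⟨b, hb, hdfa, hbder⟩ := G.exists_blocks_of_tableStep hv
    obtain ⟨st₂, hst₂, hcl₂, htop₂, -⟩ :=
      hdfa (.phase (G.control_regular.dfa.step st.top τ) (some τ)) trivial rfl
    obtain ⟨c, hcder, hcacc⟩ := ih v hder st₂ hcl₂
    refine ⟨.start τ :: (b ++ c), ⟨u.map (Sum.map id .pending), ?_, ?_⟩, fun hacc => ?_⟩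
    · exact tableStep_iff_subst.2 ((G.subst_map_plain_iff fun _ => rfl).2 rfl)
    · rw [List.map_append]
      exact hbder.trans hcder
    · rw [ctrlDFA_evalFrom_some_cons]
      simp only [ctrlStep, hst, if_true, DFA.evalFrom_of_append, hst₂]
      exact hcacc (htop₂ ▸ hacc)

theorem language_toET0L : G.toET0L.language = G.language := by
  ext w
  constructor
  · rintro ⟨c, hc, hder⟩
    have hinit : G.Simulates (.phase G.control_regular.dfa.start none) [.inr G.start]
        [.inr (.plain G.start)] :=
      (Subst.pure_iff (f := Nonterm.plain)).2 rfl |>.mono fun X => by simp [phaseRules, doneRules]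
    obtain ⟨v, ts, hv, hts, hder'⟩ := G.exists_seqDerives_of_simulates w c _ _ _ hinit hder hc
    obtain rfl : v = [.inr G.start] := G.subst_doneRules_none_iff.1 hv
    exact ⟨ts, G.control_regular.dfa_accepts ▸ hts, hder'⟩
  · rintro ⟨ts, hts, hder⟩
    rw [← G.control_regular.dfa_accepts] at hts
    obtain ⟨c, hcder, hacc⟩ := G.exists_ctrlWord_of_seqDerives w ts _ hder
      (.phase G.control_regular.dfa.start none) trivial
    exact ⟨c, hacc hts, hcder⟩

end

end ExtET0LGrammar

theorem extET0LGrammar_language_isET0L_general (σ : Type)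
    (G : ExtET0LGrammar σ) : IsET0L G.language :=
  ⟨G.toET0L, G.language_toET0L⟩

/-- Extended ET0L grammars generate exactly ET0L languages (Christensen). -/
theorem extET0LGrammar_language_isET0L (σ : Type) [Fintype σ]
    (G : ExtET0LGrammar σ) : IsET0L G.language :=
  extET0LGrammar_language_isET0L_general σ G
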